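/- Let n > 1 and let f be a Littlewood polynomial of length n drawn uniformly at random. Then Var(‖f‖₄⁴) = (16/3)n³ - 20n² + (56/3)n - 2 + 2(-1)ⁿ. -/

import Mathlib

/-!
Parseval's identity turns ‖f‖₄⁴ into the sum of the squared aperiodic autocorrelations,
n² + 2 ∑_{d ≥ 1} C_d², where C_d = ∑_j a_j a_{j+d}. For ±1 coefficients the diagonal part of C_d²
is constant: C_d² = (n - d) + 2 P_d with P_d = ∑_{j < i} a_j a_{j+d} a_i a_{i+d}. The average of
a monomial in independent signs is 1 if every index occurs an even number of times and 0
otherwise, so P_d has mean zero and Var ‖f‖₄⁴ = 16 E[(∑_d P_d)²]. For the eight indices of a term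
of P_d P_e the parity condition forces l = j and either (d = e, k = i) or (i = j + e, k = j + d),
so E[P_d P_e] is C(n - d, 2) when d = e and (n - d - e)₊ otherwise. Summing these counts gives
the formula; the term (-1)ⁿ comes from the diagonal sum ∑_d (n - 2d)₊.
-/

open MeasureTheory

/-- The fourth power of the `L₄` norm of `f(z) = ∑_{j<n} a_j z^j` on the unit circle. -/
noncomputable def L4pow4 (n : ℕ) (a : ℕ → ℝ) : ℝ :=
  (1 / (2 * Real.pi)) * ∫ θ in (0:ℝ)..(2 * Real.pi),
    (‖∑ j ∈ Finset.range n, (a j : ℂ) * Complex.exp ((θ : ℂ) * Complex.I) ^ j‖) ^ 4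

/-- Extend a ±1 coefficient vector indexed by `Fin n` (given as Booleans) to `ℕ → ℝ`. -/
def signs (n : ℕ) (a : Fin n → Bool) : ℕ → ℝ :=
  fun j => if h : j < n then (if a ⟨j, h⟩ then 1 else -1) else 0

open Finset Complex Real

/-- The aperiodic autocorrelation that the paper calls `C_{n-d}`. -/
noncomputable def acorr (n d : ℕ) (x : ℕ → ℝ) : ℝ :=
  ∑ j ∈ range (n - d), x j * x (j + d)

lemma integral_exp_int_mul_I (D : ℤ) :
    ∫ θ in (0:ℝ)..2 * π, exp (D * θ * I) = if D = 0 then (2 * π : ℂ) else 0 := by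
  split_ifs with hD
  · simp [hD]
  · have hc : (D : ℂ) * I ≠ 0 := mul_ne_zero (Int.cast_ne_zero.mpr hD) I_ne_zero
    simp_rw [mul_right_comm _ _ I]
    rw [integral_exp_mul_complex hc]
    have : (D : ℂ) * I * ((2 * π : ℝ) : ℂ) = D * (2 * π * I) := by push_cast; ring
    push_cast at this ⊢
    rw [this, exp_int_mul_two_pi_mul_I]
    simp

lemma integral_sq_sum_exp (s : Finset ℤ) (c : ℤ → ℂ) :
    ∫ θ in (0:ℝ)..2 * π, (∑ u ∈ s, c u * exp (u * θ * I)) ^ 2 =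
      2 * π * ∑ u ∈ s, ∑ v ∈ s, if u + v = 0 then c u * c v else 0 := by
  have hexp (u v : ℤ) (θ : ℝ) : c u * exp (u * θ * I) * (c v * exp (v * θ * I)) =
      c u * c v * exp ((u + v : ℤ) * θ * I) := by
    push_cast; rw [add_mul, add_mul, Complex.exp_add]; ring
  have hint (u v : ℤ) : IntervalIntegrable (fun θ : ℝ => c u * c v * exp ((u + v : ℤ) * θ * I))
      volume 0 (2 * π) := Continuous.intervalIntegrable (by fun_prop) _ _
  simp_rw [sq, sum_mul_sum, hexp]
  rw [intervalIntegral.integral_finsetSum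
    (f := fun u θ => ∑ v ∈ s, c u * c v * exp ((u + v : ℤ) * θ * I))
    fun u _ => Continuous.intervalIntegrable (by fun_prop) _ _, mul_sum]
  refine sum_congr rfl fun u _ => ?_
  rw [intervalIntegral.integral_finsetSum fun v _ => hint u v, mul_sum]
  refine sum_congr rfl fun v _ => ?_
  rw [intervalIntegral.integral_const_mul, integral_exp_int_mul_I]
  split_ifs <;> ring

lemma sum_filter_sub_eq_acorr (n : ℕ) (x : ℕ → ℝ) (u : ℤ) :
    ∑ p ∈ range n ×ˢ range n with (p.1 : ℤ) - p.2 = u, x p.1 * x p.2 = acorr n u.natAbs x := by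
  obtain ⟨d, rfl | rfl⟩ := Int.eq_nat_or_neg u
  · refine sum_nbij' Prod.snd (fun k => (k + d, k)) ?_ ?_ ?_ ?_ ?_ <;>
      simp +contextual <;> grind
  · refine sum_nbij' Prod.fst (fun k => (k, k + d)) ?_ ?_ ?_ ?_ ?_ <;>
      simp +contextual <;> grind

lemma sum_Ioo_natAbs {M : Type*} [AddCommMonoid M] (n : ℕ) (g : ℕ → M) :
    ∑ u ∈ Ioo (-n : ℤ) n, g u.natAbs = ∑ d ∈ range n, g d + ∑ d ∈ Ico 1 n, g d := by
  rw [← sum_filter_add_sum_filter_not _ (0 ≤ ·)]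
  congr 1
  · refine sum_nbij' Int.toNat Nat.cast ?_ ?_ ?_ ?_ ?_ <;> simp +contextual <;> grind
  · refine sum_nbij' Int.natAbs (fun d => -(d : ℤ)) ?_ ?_ ?_ ?_ ?_ <;> simp +contextual <;> grind

lemma ofReal_norm_sq_eq_sum_acorr (n : ℕ) (a : ℕ → ℝ) (θ : ℝ) :
    ((‖∑ j ∈ range n, (a j : ℂ) * exp (θ * I) ^ j‖ ^ 2 : ℝ) : ℂ) =
      ∑ u ∈ Ioo (-n : ℤ) n, (acorr n u.natAbs a : ℂ) * exp (u * θ * I) := by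
  have hexp (j : ℕ) : exp (θ * I) ^ j = exp (j * θ * I) := by rw [← Complex.exp_nat_mul]; ring_nf
  have hprod : ((‖∑ j ∈ range n, (a j : ℂ) * exp (θ * I) ^ j‖ ^ 2 : ℝ) : ℂ) =
      ∑ p ∈ range n ×ˢ range n,
        ((a p.1 * a p.2 : ℝ) : ℂ) * exp (((p.1 : ℤ) - p.2 : ℤ) * θ * I) := by
    rw [ofReal_pow, ← mul_conj', map_sum, sum_mul_sum, sum_product]
    refine sum_congr rfl fun j _ => sum_congr rfl fun k _ => ?_
    simp only [map_mul, conj_ofReal, ← exp_conj, hexp, conj_I, map_natCast]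
    push_cast
    rw [show ((j : ℂ) - k) * θ * I = j * θ * I + k * θ * -I by ring, Complex.exp_add]
    ring
  rw [hprod, ← sum_fiberwise_of_maps_to (g := fun p : ℕ × ℕ => (p.1 : ℤ) - p.2)
    (t := Ioo (-n : ℤ) n) (by simp +contextual; omega)]
  refine sum_congr rfl fun u _ => ?_
  rw [← sum_filter_sub_eq_acorr, ofReal_sum, sum_mul]
  refine sum_congr rfl fun p hp => ?_
  rw [(mem_filter.mp hp).2]

theorem L4pow4_eq_sum_acorr_sq (n : ℕ) (a : ℕ → ℝ) :
    L4pow4 n a = ∑ d ∈ range n, acorr n d a ^ 2 + ∑ d ∈ Ico 1 n, acorr n d a ^ 2 := by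
  set c : ℤ → ℂ := fun u => acorr n u.natAbs a
  have hpoint (θ : ℝ) : ((‖∑ j ∈ range n, (a j : ℂ) * exp (θ * I) ^ j‖ ^ 4 : ℝ) : ℂ) =
      (∑ u ∈ Ioo (-n : ℤ) n, c u * exp (u * θ * I)) ^ 2 := by
    rw [← ofReal_norm_sq_eq_sum_acorr, ← ofReal_pow, ← pow_mul]
  have hsum (u : ℤ) (hu : u ∈ Ioo (-n : ℤ) n) :
      (∑ v ∈ Ioo (-n : ℤ) n, if u + v = 0 then c u * c v else 0) =
        ((acorr n u.natAbs a ^ 2 : ℝ) : ℂ) := by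
    rw [sum_eq_single_of_mem (-u) (by simp at hu ⊢; omega) (fun v _ hv => if_neg (by omega)),
      if_pos (by omega)]
    simp [c, sq]
  have hint : ((∫ θ in (0:ℝ)..2 * π, ‖∑ j ∈ range n, (a j : ℂ) * exp (θ * I) ^ j‖ ^ 4 : ℝ) : ℂ) =
      ((2 * π * ∑ u ∈ Ioo (-n : ℤ) n, acorr n u.natAbs a ^ 2 : ℝ) : ℂ) := by
    rw [← intervalIntegral.integral_ofReal]
    simp_rw [hpoint]
    rw [integral_sq_sum_exp, sum_congr rfl hsum]
    push_cast; rfl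
  rw [L4pow4, ofReal_injective hint, ← sum_Ioo_natAbs n (fun d => acorr n d a ^ 2)]
  field_simp

lemma sq_sum_eq_sum_sq_add {ι R : Type*} [LinearOrder ι] [CommSemiring R] (s : Finset ι)
    (y : ι → R) :
    (∑ i ∈ s, y i) ^ 2 =
      ∑ i ∈ s, y i ^ 2 + 2 * ∑ i ∈ s, ∑ j ∈ s, if j < i then y j * y i else 0 := by
  have hsplit (i j : ι) : y i * y j = (if j < i then y j * y i else 0) +
      (if i < j then y i * y j else 0) + (if i = j then y i ^ 2 else 0) := by
    rcases lt_trichotomy i j with h | rfl | h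
    · simp [h, h.not_gt, h.ne]
    · simp [sq]
    · simp [h, h.not_gt, h.ne', mul_comm]
  rw [sq, sum_mul_sum, sum_congr rfl fun i _ => sum_congr rfl fun j _ => hsplit i j]
  simp only [sum_add_distrib, sum_ite_eq]
  rw [sum_comm (f := fun i j => if i < j then y i * y j else 0),
    sum_congr rfl fun i hi => if_pos hi]
  ring

lemma sum_prod_map_signs (n : ℕ) (L : List ℕ) (hL : ∀ x ∈ L, x < n) :
    ∑ a : Fin n → Bool, (L.map (signs n a)).prod =
      ∏ i : Fin n, (1 + (-1) ^ L.count (i : ℕ) : ℝ) := by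
  have hprod (a : Fin n → Bool) :
      (L.map (signs n a)).prod = ∏ i : Fin n, (if a i then 1 else -1 : ℝ) ^ L.count (i : ℕ) := by
    have hsigns : ∏ i : Fin n, (if a i then 1 else -1 : ℝ) ^ L.count (i : ℕ) =
        ∏ j ∈ range n, signs n a j ^ L.count j := by
      rw [← Fin.prod_univ_eq_prod_range (fun j => signs n a j ^ L.count j)]
      simp [signs]
    rw [prod_list_map_count, hsigns]
    refine prod_subset (fun j hj => mem_range.2 (hL j (List.mem_toFinset.1 hj))) fun j _ hj => ?_
    rw [List.count_eq_zero.2 (fun h => hj (List.mem_toFinset.2 h)), pow_zero]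
  simp_rw [hprod]
  rw [← Fintype.prod_sum fun (i : Fin n) (b : Bool) => (if b then 1 else -1 : ℝ) ^ L.count (i : ℕ)]
  simp

open Classical in
lemma sum_prod_map_signs_eq_ite {n : ℕ} {L : List ℕ} (hL : ∀ x ∈ L, x < n) :
    ∑ a : Fin n → Bool, (L.map (signs n a)).prod = if ∀ t, Even (L.count t) then 2 ^ n else 0 := by
  rw [sum_prod_map_signs n L hL]
  split_ifs with h
  · simp [(h _).neg_one_pow, one_add_one_eq_two]
  · obtain ⟨t, ht⟩ := not_forall.1 h
    have htn : t < n := by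
      by_contra htn
      exact ht (by rw [List.count_eq_zero.2 fun hm => htn (hL t hm)]; exact Even.zero)
    exact prod_eq_zero (mem_univ ⟨t, htn⟩) (by simp [Nat.not_even_iff_odd.1 ht])

lemma signs_mul_self {n : ℕ} (a : Fin n → Bool) {j : ℕ} (hj : j < n) :
    signs n a j * signs n a j = 1 := by
  simp only [signs, dif_pos hj]
  split_ifs <;> norm_num

noncomputable def acorrCross (n d : ℕ) (x : ℕ → ℝ) : ℝ :=
  ∑ i ∈ range (n - d), ∑ j ∈ range (n - d),
    if j < i then x j * x (j + d) * (x i * x (i + d)) else 0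

lemma acorr_signs_sq (n d : ℕ) (a : Fin n → Bool) :
    acorr n d (signs n a) ^ 2 = (n - d : ℕ) + 2 * acorrCross n d (signs n a) := by
  rw [acorr, sq_sum_eq_sum_sq_add, acorrCross]
  congr 1
  rw [sum_congr rfl fun j hj => ?_, sum_const, card_range, nsmul_one]
  have hj := mem_range.1 hj
  rw [mul_pow, sq, sq, signs_mul_self a (by omega), signs_mul_self a (by omega), one_mul]

lemma acorr_signs_zero (n : ℕ) (a : Fin n → Bool) : acorr n 0 (signs n a) = n := by
  simp only [acorr, Nat.sub_zero, Nat.add_zero]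
  rw [sum_congr rfl fun j hj => signs_mul_self a (mem_range.1 hj)]
  simp

lemma L4pow4_signs (n : ℕ) (a : Fin n → Bool) :
    L4pow4 n (signs n a) = n ^ 2 + 2 * ∑ d ∈ Ico 1 n, acorr n d (signs n a) ^ 2 := by
  rw [L4pow4_eq_sum_acorr_sq]
  rcases Nat.eq_zero_or_pos n with rfl | hn
  · simp
  · rw [range_eq_Ico, sum_eq_sum_Ico_succ_bot hn, acorr_signs_zero]
    ring

lemma even_count_cross_iff {d e i j k l : ℕ} (hd : 0 < d) (he : 0 < e) (hji : j < i) (hlk : l < k) :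
    (∀ t, Even ([j, j + d, i, i + d, l, l + e, k, k + e].count t)) ↔
      l = j ∧ (d = e ∧ k = i ∨ i = j + e ∧ k = j + d) := by
  constructor
  · intro H
    have hc (t : ℕ) := H t
    simp only [List.count_cons, List.count_nil, beq_iff_eq, Nat.even_iff] at hc
    -- the smallest and the largest index must each occur at least twice
    have hlj : l = j := by
      rcases lt_trichotomy j l with h | h | h
      · have := hc j; split_ifs at this <;> omega
      · exact h.symm
      · have := hc l; split_ifs at this <;> omega
    subst hlj
    have hmax : i + d = k + e := by
      rcases lt_trichotomy (i + d) (k + e) with h | h | h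
      · have := hc (k + e); split_ifs at this <;> omega
      · exact h
      · have := hc (i + d); split_ifs at this <;> omega
    have hi : i = k ∨ i = l + d ∨ i = l + e := by
      have := hc i; split_ifs at this <;> omega
    have hk : k = i ∨ k = l + d ∨ k = l + e := by
      have := hc k; split_ifs at this <;> omega
    omega
  · rintro ⟨rfl, ⟨rfl, rfl⟩ | ⟨rfl, rfl⟩⟩ t <;>
      simp only [List.count_cons, List.count_nil, beq_iff_eq, Nat.even_iff] <;>
      split_ifs <;> omega

lemma sum_range_boole_lt {N M : ℕ} (h : M ≤ N) :
    ∑ x ∈ range N, (if x < M then 1 else 0 : ℕ) = M := by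
  rw [sum_boole, show {x ∈ range N | x < M} = range M by ext; simp; omega]
  simp

lemma sum_ite_diag_eq_choose_two (m : ℕ) :
    ∑ i ∈ range m, ∑ j ∈ range m, ∑ k ∈ range m, ∑ l ∈ range m,
    (if l = j ∧ k = i ∧ j < i then 1 else 0 : ℕ) = m.choose 2 := by
  simp only [ite_and, sum_ite_eq', mem_range, sum_ite_irrel, sum_const_zero]
  rw [Nat.choose_two_right, ← sum_range_id]
  refine sum_congr rfl fun i hi => ?_
  calc _ = ∑ j ∈ range m, if j < i then 1 else 0 := sum_congr rfl fun j _ => by simp_all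
    _ = i := sum_range_boole_lt (mem_range.1 hi).le

lemma sum_ite_shift_eq_tsub_tsub {d e : ℕ} (n : ℕ) (hd : 0 < d) (he : 0 < e) :
    ∑ i ∈ range (n - d), ∑ j ∈ range (n - d), ∑ k ∈ range (n - e), ∑ l ∈ range (n - e),
    (if l = j ∧ k = j + d ∧ i = j + e then 1 else 0 : ℕ) = n - d - e := by
  rw [sum_comm]
  simp only [ite_and, sum_ite_eq', mem_range, sum_ite_irrel, sum_const_zero]
  rw [← sum_range_boole_lt (N := n - d) (M := n - d - e) (by omega)]
  refine sum_congr rfl fun j _ => ?_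
  split_ifs <;> omega

lemma sum_acorrCross_signs {n d : ℕ} (hd : 0 < d) :
    ∑ a : Fin n → Bool, acorrCross n d (signs n a) = 0 := by
  unfold acorrCross
  rw [sum_comm]
  refine sum_eq_zero fun i hi => ?_
  rw [sum_comm]
  refine sum_eq_zero fun j hj => ?_
  by_cases hji : j < i
  · have hL : ∀ t ∈ [j, j + d, i, i + d], t < n := by simp at hi hj ⊢; omega
    calc _ = ∑ a : Fin n → Bool, ([j, j + d, i, i + d].map (signs n a)).prod := by
          simp [hji, mul_assoc]
      _ = 0 := by
          rw [sum_prod_map_signs_eq_ite hL, if_neg]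
          -- `j` is the only smallest index
          intro H
          have hcount := H j
          simp only [List.count_cons, List.count_nil, beq_iff_eq, Nat.even_iff] at hcount
          split_ifs at hcount <;> omega
  · simp [hji]

lemma sum_signs_mul_cross_terms {n d e i j k l : ℕ} (hd : 0 < d) (he : 0 < e) (hi : i < n - d)
    (hk : k < n - e) :
    ∑ a : Fin n → Bool,
      (if j < i then signs n a j * signs n a (j + d) * (signs n a i * signs n a (i + d)) else 0) *
      (if l < k then signs n a l * signs n a (l + e) * (signs n a k * signs n a (k + e)) else 0) =
    2 ^ n * ((if (if d = e then l = j ∧ k = i ∧ j < i else l = j ∧ k = j + d ∧ i = j + e)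
      then 1 else 0 : ℕ) : ℝ) := by
  by_cases hji : j < i
  · by_cases hlk : l < k
    · have hL : ∀ t ∈ [j, j + d, i, i + d, l, l + e, k, k + e], t < n := by simp; omega
      calc _ = ∑ a : Fin n → Bool,
              ([j, j + d, i, i + d, l, l + e, k, k + e].map (signs n a)).prod := by
            simp [hji, hlk, mul_assoc]
        _ = _ := by
            rw [sum_prod_map_signs_eq_ite hL]
            simp only [even_count_cross_iff hd he hji hlk]
            split_ifs <;> simp_all
    · simp only [hlk, if_false, mul_zero, sum_const_zero]
      rw [if_neg (by split_ifs <;> rintro ⟨h1, h2, h3⟩ <;> omega), Nat.cast_zero, mul_zero]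
  · simp only [hji, if_false, zero_mul, sum_const_zero]
    rw [if_neg (by split_ifs <;> rintro ⟨h1, h2, h3⟩ <;> omega), Nat.cast_zero, mul_zero]

def crossCount (n d e : ℕ) : ℕ :=
  if d = e then (n - d).choose 2 else n - d - e

lemma sum_acorrCross_mul_signs {n d e : ℕ} (hd : 0 < d) (he : 0 < e) :
    ∑ a : Fin n → Bool, acorrCross n d (signs n a) * acorrCross n e (signs n a) =
      2 ^ n * (crossCount n d e : ℝ) := by
  simp_rw [acorrCross, sum_mul_sum]
  calc _ = ∑ i ∈ range (n - d), ∑ k ∈ range (n - e), ∑ j ∈ range (n - d), ∑ l ∈ range (n - e),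
        2 ^ n * ((if (if d = e then l = j ∧ k = i ∧ j < i else l = j ∧ k = j + d ∧ i = j + e)
          then 1 else 0 : ℕ) : ℝ) := by
        rw [sum_comm]; refine sum_congr rfl fun i hi => ?_
        rw [sum_comm]; refine sum_congr rfl fun k hk => ?_
        rw [sum_comm]; refine sum_congr rfl fun j _ => ?_
        rw [sum_comm]; refine sum_congr rfl fun l _ => ?_
        simp only [mem_range] at hi hk
        exact sum_signs_mul_cross_terms hd he hi hk
    _ = _ := by
        simp only [← mul_sum, ← Nat.cast_sum]
        rw [sum_congr rfl fun i _ => sum_comm]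
        unfold crossCount
        split_ifs with hde
        · subst hde
          simp only [sum_ite_diag_eq_choose_two]
        · simp only [sum_ite_shift_eq_tsub_tsub n hd he]

lemma sum_sum_acorrCross_signs (n : ℕ) :
    ∑ a : Fin n → Bool, ∑ d ∈ Ico 1 n, acorrCross n d (signs n a) = 0 := by
  rw [sum_comm]
  exact sum_eq_zero fun d hd => sum_acorrCross_signs (by simp at hd; omega)

lemma sum_sq_sum_acorrCross_signs (n : ℕ) :
    ∑ a : Fin n → Bool, (∑ d ∈ Ico 1 n, acorrCross n d (signs n a)) ^ 2 =
      2 ^ n * ∑ d ∈ Ico 1 n, ∑ e ∈ Ico 1 n, (crossCount n d e : ℝ) := by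
  simp_rw [sq, sum_mul_sum, mul_sum]
  rw [sum_comm]
  refine sum_congr rfl fun d hd => ?_
  rw [sum_comm]
  refine sum_congr rfl fun e he => ?_
  simp only [mem_Ico] at hd he
  exact sum_acorrCross_mul_signs (by omega) (by omega)

lemma sum_Ico_one_tsub {M : Type*} [AddCommMonoid M] {g : ℕ → M} (hg : g 0 = 0) {m n : ℕ}
    (hm : m ≤ n) : ∑ d ∈ Ico 1 n, g (m - d) = ∑ i ∈ range m, g i := by
  have hpos {d : ℕ} (h : g (m - d) ≠ 0) : d < m := by
    by_contra hd
    exact h (by rw [Nat.sub_eq_zero_of_le (not_lt.1 hd), hg])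
  refine sum_bij_ne_zero (fun d _ _ => m - d) ?_ ?_ ?_ (fun _ _ _ => rfl)
  · intro d hd h
    have := hpos h
    simp at hd ⊢; omega
  · intro d₁ h₁ h₁' d₂ h₂ h₂' h
    have := hpos h₁'; have := hpos h₂'
    simp at h₁ h₂; omega
  · intro i hi h
    have : i ≠ 0 := fun h0 => h (by rw [h0, hg])
    exact ⟨m - i, by simp at hi ⊢; omega, by rwa [Nat.sub_sub_self (by simp at hi; omega)],
      Nat.sub_sub_self (by simp at hi; omega)⟩

lemma sum_range_choose_succ (m k : ℕ) : ∑ i ∈ range m, i.choose (k + 1) = m.choose (k + 2) := by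
  induction m with
  | zero => simp
  | succ m ih => rw [sum_range_succ, ih, Nat.choose_succ_succ' m (k + 1), add_comm]

lemma sum_Ico_one_tsub_choose (k : ℕ) {m n : ℕ} (hm : m ≤ n) :
    ∑ d ∈ Ico 1 n, (m - d).choose (k + 1) = m.choose (k + 2) := by
  rw [sum_Ico_one_tsub (g := (·.choose (k + 1))) (by simp) hm, sum_range_choose_succ]

lemma sum_sum_Ico_one_tsub_tsub (n : ℕ) :
    ∑ d ∈ Ico 1 n, ∑ e ∈ Ico 1 n, (n - d - e) = n.choose 3 := by
  calc _ = ∑ d ∈ Ico 1 n, ∑ e ∈ Ico 1 n, (n - d - e).choose (0 + 1) := by simp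
    _ = ∑ d ∈ Ico 1 n, (n - d).choose (0 + 2) :=
        sum_congr rfl fun d _ => sum_Ico_one_tsub_choose 0 (Nat.sub_le n d)
    _ = n.choose 3 := sum_Ico_one_tsub_choose 1 le_rfl

lemma cast_choose_three (n : ℕ) : (n.choose 3 : ℝ) = n * (n - 1) * (n - 2) / 6 := by
  induction n with
  | zero => simp
  | succ n ih =>
    rw [Nat.choose_succ_succ', Nat.cast_add, ih, Nat.cast_choose_two]
    push_cast; ring

lemma sum_Ico_tsub_two_mul_add_two (n : ℕ) :
    ∑ d ∈ Ico 1 (n + 2), (n + 2 - 2 * d) = ∑ d ∈ Ico 1 n, (n - 2 * d) + n := by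
  rw [sum_Ico_eq_sum_range, sum_Ico_eq_sum_range, show n + 2 - 1 = n + 1 by omega, sum_range_succ']
  obtain _ | n := n
  · simp
  · rw [sum_range_succ, show n + 1 + 2 - 2 * (1 + (n + 1)) = 0 by omega, add_zero,
      show n + 1 - 1 = n by omega]
    congr 1
    exact sum_congr rfl fun k _ => by omega

theorem cast_sum_Ico_tsub_two_mul : ∀ n : ℕ,
    (∑ d ∈ Ico 1 n, ((n - 2 * d : ℕ) : ℝ)) = (2 * n ^ 2 - 4 * n + 1 - (-1) ^ n) / 8
  | 0 => by simp
  | 1 => by norm_num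
  | n + 2 => by
    rw [← Nat.cast_sum, sum_Ico_tsub_two_mul_add_two, Nat.cast_add, Nat.cast_sum,
      cast_sum_Ico_tsub_two_mul n]
    push_cast; ring

lemma sum_sum_crossCount (n : ℕ) :
    ∑ d ∈ Ico 1 n, ∑ e ∈ Ico 1 n, (crossCount n d e : ℝ) =
      n * (n - 1) * (n - 2) / 3 - (2 * n ^ 2 - 4 * n + 1 - (-1) ^ n) / 8 := by
  have hrow (d : ℕ) (hd : d ∈ Ico 1 n) :
      ∑ e ∈ Ico 1 n, (crossCount n d e : ℝ) =
        ∑ e ∈ Ico 1 n, ((n - d - e : ℕ) : ℝ) + (n - d).choose 2 - ((n - 2 * d : ℕ) : ℝ) := by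
    simp only [crossCount]
    rw [← add_sum_erase _ _ hd, ← add_sum_erase _ (fun e => ((n - d - e : ℕ) : ℝ)) hd, if_pos rfl,
      sum_congr rfl fun e he => by rw [if_neg (ne_of_mem_erase he).symm], Nat.sub_sub, ← two_mul]
    ring
  have hT : ∑ d ∈ Ico 1 n, ∑ e ∈ Ico 1 n, ((n - d - e : ℕ) : ℝ) = n.choose 3 := by
    exact_mod_cast sum_sum_Ico_one_tsub_tsub n
  have hC : ∑ d ∈ Ico 1 n, ((n - d).choose 2 : ℝ) = n.choose 3 := by
    exact_mod_cast sum_Ico_one_tsub_choose 1 le_rfl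
  rw [sum_congr rfl hrow, sum_sub_distrib, sum_add_distrib, hT, hC, cast_sum_Ico_tsub_two_mul,
    cast_choose_three]
  ring

theorem stmt_13_general (n : ℕ) :
    (1 / 2 ^ n : ℝ) * ∑ a : Fin n → Bool,
        (L4pow4 n (signs n a) -
          (1 / 2 ^ n : ℝ) * ∑ b : Fin n → Bool, L4pow4 n (signs n b)) ^ 2 =
      (16 / 3) * (n : ℝ) ^ 3 - 20 * n ^ 2 + (56 / 3) * n - 2 + 2 * (-1 : ℝ) ^ n := by
  set P : (Fin n → Bool) → ℝ := fun a => ∑ d ∈ Ico 1 n, acorrCross n d (signs n a)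
  set c : ℝ := n ^ 2 + 2 * ∑ d ∈ Ico 1 n, ((n - d : ℕ) : ℝ)
  have hX (a : Fin n → Bool) : L4pow4 n (signs n a) = c + 4 * P a := by
    simp only [L4pow4_signs, acorr_signs_sq, sum_add_distrib, ← mul_sum, c, P]
    ring
  have hmean : (1 / 2 ^ n : ℝ) * ∑ b, L4pow4 n (signs n b) = c := by
    simp only [hX, sum_add_distrib, ← mul_sum, P, sum_sum_acorrCross_signs, sum_const, card_univ]
    simp
  rw [hmean]
  simp only [hX, add_sub_cancel_left, mul_pow, ← mul_sum, P, sum_sq_sum_acorrCross_signs,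
    sum_sum_crossCount]
  field_simp
  ring

/-- For `f` drawn uniformly at random from the Littlewood polynomials of length `n`,
`Var(‖f‖₄⁴) = (16/3)n³ - 20n² + (56/3)n - 2 + 2(-1)ⁿ`. -/
theorem stmt_13 (n : ℕ) (hn : 1 < n) :
    (1 / 2 ^ n : ℝ) * ∑ a : Fin n → Bool,
        (L4pow4 n (signs n a) -
          (1 / 2 ^ n : ℝ) * ∑ b : Fin n → Bool, L4pow4 n (signs n b)) ^ 2 =
      (16 / 3) * (n : ℝ) ^ 3 - 20 * n ^ 2 + (56 / 3) * n - 2 + 2 * (-1 : ℝ) ^ n :=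
  stmt_13_general n
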